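/- Let f₁, f₂ : ℝ → ℝ be continuous and T-periodic, let t* ∈ ℝ, ε₁ > 0 and k ∈ {1, 2}. Assume f₁ and f₂ are Cᵏ on (t* − ε₁, t*), that f₁(t) < f₂(t) for all t ∈ (t* − ε₁, t*), that f₁, f₂ and their derivatives up to order k extend continuously from the left to t*, and that the one-sided limits satisfy f₁⁽ʲ⁾(t*) = f₂⁽ʲ⁾(t*) for j = 0, 1, …, k−1 while f₁⁽ᵏ⁾(t*) ≠ f₂⁽ᵏ⁾(t*). Then there exist positive constants K and ε such that every trajectory of the Fermi–Ulam model whose initial condition satisfies v₀ > K and t₀ ∈ (t* − ε, t*) has unbounded velocity at time t*: tₙ < t* for all n, tₙ → t*, and vₙ → ∞ as n → ∞. -/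

import Mathlib

/-!
Near the contact time `b = t⋆` the gap between the plates is `O((b - s)^k)`, while the plates
close in at relative speed `≳ (b - s)^(k-1)`; both follow from the mean value theorem applied to
the gap and its derivatives, whose one-sided limits vanish, the sign of `f₁⁽ᵏ⁾ - f₂⁽ᵏ⁾` at `b`
being forced by the positivity of the gap. A ball of speed `v ≫ 1` therefore crosses the gap in
time `O((b - s)^k / v)`, hits both plates before they touch, and gains at least
`2c (b - s)^(k-1)` in speed per bounce, up to a loss proportional to the flight time.
The collision times increase to a limit, which must be `b`: otherwise the gap stays bounded below
while the speed grows at most linearly, and the flight times would sum like a harmonic series.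
Finally the speed gains sum to infinity: for `k = 1` each is bounded below, and for `k = 2` the
distances `τₙ = b - tₙ` satisfy `τₙ - τₙ₊₁ ≤ τₙ² / 2`, so `1 / τₙ` grows at most linearly and
`∑ τₙ` diverges.
-/

open Filter Topology Set

/-- A trajectory of the Fermi–Ulam model in an external field with downward
acceleration `g`, lower plate `f₁` and upper plate `f₂`. -/
def IsFUTrajectory (g : ℝ) (f₁ f₂ : ℝ → ℝ) (t v tt vv : ℕ → ℝ) : Prop :=
  ∀ n : ℕ,
    0 < v n ∧ vv n < 0 ∧
    t n < tt n ∧ tt n < t (n + 1) ∧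
    f₂ (tt n) - f₁ (t n) = v n * (tt n - t n) - g / 2 * (tt n - t n) ^ 2 ∧
    (∀ s : ℝ, t n < s →
      f₂ s - f₁ (t n) = v n * (s - t n) - g / 2 * (s - t n) ^ 2 → tt n ≤ s) ∧
    vv n = -(v n) + g * (tt n - t n) + 2 * deriv f₂ (tt n) ∧
    f₂ (tt n) - f₁ (t (n + 1)) =
      -(vv n) * (t (n + 1) - tt n) + g / 2 * (t (n + 1) - tt n) ^ 2 ∧
    (∀ s : ℝ, tt n < s →
      f₂ (tt n) - f₁ s = -(vv n) * (s - tt n) + g / 2 * (s - tt n) ^ 2 →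
      t (n + 1) ≤ s) ∧
    v (n + 1) = v n + g * (t (n + 1) - 2 * tt n + t n)
      + 2 * deriv f₁ (t (n + 1)) - 2 * deriv f₂ (tt n)

theorem eventually_nhdsLT_forall_Ico {α : Type*} [TopologicalSpace α] [LinearOrder α]
    [OrderTopology α] [NoMinOrder α] {b : α} {p : α → Prop} (h : ∀ᶠ x in 𝓝[<] b, p x) :
    ∀ᶠ s in 𝓝[<] b, ∀ x ∈ Ico s b, p x := by
  obtain ⟨l, hl, hp⟩ := (nhdsLT_basis b).eventually_iff.1 h
  filter_upwards [Ioo_mem_nhdsLT hl] with s hs x hx using hp ⟨hs.1.trans_le hx.1, hx.2⟩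

theorem mul_sub_le_sub_of_le_deriv_of_tendsto {F : ℝ → ℝ} {s b l lo : ℝ} (hs : s < b)
    (hF : ∀ x ∈ Ico s b, DifferentiableAt ℝ F x) (hlim : Tendsto F (𝓝[<] b) (𝓝 l))
    (hlo : ∀ x ∈ Ioo s b, lo ≤ deriv F x) : lo * (b - s) ≤ l - F s := by
  have hmvt : ∀ u ∈ Ioo s b, lo * (u - s) ≤ F u - F s := by
    intro u hu
    have hsub : Icc s u ⊆ Ico s b := Icc_subset_Ico_right hu.2
    refine (convex_Icc s u).mul_sub_le_image_sub_of_le_deriv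
      (fun x hx => (hF x (hsub hx)).continuousAt.continuousWithinAt) ?_ ?_ s
      (left_mem_Icc.2 hu.1.le) u (right_mem_Icc.2 hu.1.le) hu.1.le <;> rw [interior_Icc]
    · exact fun x hx => (hF x (hsub (Ioo_subset_Icc_self hx))).differentiableWithinAt
    · exact fun x hx => hlo x ⟨hx.1, hx.2.trans hu.2⟩
  have hlim' : Tendsto (fun u => F u - F s - lo * (u - s)) (𝓝[<] b)
      (𝓝 (l - F s - lo * (b - s))) :=
    (hlim.sub_const _).sub (((tendsto_id.sub_const s).const_mul lo).mono_left nhdsWithin_le_nhds)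
  have : 0 ≤ l - F s - lo * (b - s) := ge_of_tendsto hlim' <| by
    filter_upwards [Ioo_mem_nhdsLT hs] with u hu
    linarith [hmvt u hu]
  linarith

theorem eventually_sub_mem_Icc_of_tendsto_deriv {F : ℝ → ℝ} {b l e lo hi : ℝ}
    (hF : ∀ᶠ x in 𝓝[<] b, DifferentiableAt ℝ F x) (hlim : Tendsto F (𝓝[<] b) (𝓝 l))
    (hderiv : Tendsto (deriv F) (𝓝[<] b) (𝓝 e)) (hlo : lo < e) (hhi : e < hi) :
    ∀ᶠ s in 𝓝[<] b, l - F s ∈ Icc (lo * (b - s)) (hi * (b - s)) := by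
  filter_upwards [eventually_nhdsLT_forall_Ico (hF.and (hderiv.eventually (Ioo_mem_nhds hlo hhi))),
    self_mem_nhdsWithin] with s hs hsb
  have hneg := mul_sub_le_sub_of_le_deriv_of_tendsto (F := -F) (l := -l) (lo := -hi)
    hsb (fun x hx => (hs x hx).1.neg) hlim.neg fun x hx => by
      rw [deriv.neg]; linarith [(hs x (Ioo_subset_Ico_self hx)).2.2]
  simp only [Pi.neg_apply] at hneg
  refine ⟨mul_sub_le_sub_of_le_deriv_of_tendsto hsb (fun x hx => (hs x hx).1) hlim
    fun x hx => (hs x (Ioo_subset_Ico_self hx)).2.1.le, by linarith⟩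

theorem ContDiffOn.differentiableAt_iteratedDeriv {F : Type*} [NormedAddCommGroup F]
    [NormedSpace ℝ F] {f : ℝ → F} {s : Set ℝ} {n : WithTop ℕ∞} {j : ℕ} {x : ℝ}
    (hf : ContDiffOn ℝ n f s) (hs : IsOpen s) (hj : j < n) (hx : x ∈ s) :
    DifferentiableAt ℝ (iteratedDeriv j f) x :=
  ((hf.differentiableOn_iteratedDerivWithin hj hs.uniqueDiffOn x hx).differentiableAt
    (hs.mem_nhds hx)).congr_of_eventuallyEq
    ((iteratedDerivWithin_of_isOpen hs).eventuallyEq_of_mem (hs.mem_nhds hx)).symm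

theorem tendsto_iteratedDeriv_nhdsLT {F : Type*} [NormedAddCommGroup F] [NormedSpace ℝ F]
    {f : ℝ → F} {a b : ℝ} {j : ℕ} {d : F} (hab : a < b)
    (h : Tendsto (iteratedDerivWithin j f (Ioo a b)) (𝓝[Ioo a b] b) (𝓝 d)) :
    Tendsto (iteratedDeriv j f) (𝓝[<] b) (𝓝 d) := by
  rw [nhdsWithin_Ioo_eq_nhdsLT hab] at h
  refine h.congr' ?_
  filter_upwards [Ioo_mem_nhdsLT hab] with x hx using iteratedDerivWithin_of_isOpen isOpen_Ioo hx

theorem le_of_forall_zero_le_of_sign_change {ψ : ℝ → ℝ} {a a' T : ℝ} (haa' : a ≤ a')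
    (hψ : ContinuousOn ψ (Icc a a')) (ha : ψ a < 0) (ha' : 0 ≤ ψ a')
    (hT : ∀ s, a < s → ψ s = 0 → T ≤ s) : T ≤ a' := by
  obtain ⟨r, hr, hψr⟩ := intermediate_value_Icc haa' hψ ⟨ha.le, ha'⟩
  exact (hT r (hr.1.lt_of_ne (by rintro rfl; exact ha.ne hψr)) hψr).trans hr.2

theorem not_summable_of_div_succ_le {a : ℕ → ℝ} {m : ℝ} (hm : 0 < m)
    (h : ∀ n : ℕ, m / (n + 1) ≤ a n) : ¬ Summable a := by
  intro ha
  have hharm : Summable fun n : ℕ => 1 / ((n + 1 : ℕ) : ℝ) :=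
    ((ha.of_nonneg_of_le (fun n => by positivity) h).div_const m).congr fun n => by
      push_cast; field_simp
  exact Real.not_summable_one_div_natCast ((summable_nat_add_iff 1).1 hharm)

theorem Monotone.tendsto_of_le_mul_sub {t w : ℕ → ℝ} {ρ : ℝ → ℝ} {b A : ℝ} (ht : Monotone t)
    (htb : ∀ n, t n < b) (hρ : ∀ x ∈ Ico (t 0) b, ContinuousAt ρ x ∧ 0 < ρ x)
    (hw : ∀ n, 0 < w n ∧ w n ≤ A * (n + 1)) (hstep : ∀ n, ρ (t n) ≤ w n * (t (n + 1) - t n)) :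
    Tendsto t atTop (𝓝 b) := by
  have hbdd : BddAbove (range t) := ⟨b, by rintro _ ⟨n, rfl⟩; exact (htb n).le⟩
  have hlim := tendsto_atTop_ciSup ht hbdd
  rcases (ciSup_le fun n => (htb n).le : ⨆ n, t n ≤ b).lt_or_eq with hlt | heq
  swap
  · rwa [heq] at hlim
  exfalso
  set tl := ⨆ n, t n
  obtain ⟨hcont, hpos⟩ := hρ tl ⟨le_ciSup hbdd 0, hlt⟩
  obtain ⟨N, hN⟩ := eventually_atTop.1
    ((hcont.tendsto.comp hlim).eventually (eventually_ge_nhds (half_lt_self hpos)))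
  have hA : 0 < A := by nlinarith [hw 0]
  have hsum : Summable fun n => t (n + 1) - t n :=
    summable_of_sum_range_le (c := b - t 0) (fun n => sub_nonneg.2 (ht n.le_succ))
      fun n => by rw [Finset.sum_range_sub (fun i => t i)]; linarith [htb n]
  refine not_summable_of_div_succ_le (m := ρ tl / 2 / (A * (N + 1))) (by positivity)
    (fun n => ?_) ((summable_nat_add_iff N).2 hsum)
  have hρn : ρ tl / 2 ≤ w (n + N) * (t (n + N + 1) - t (n + N)) :=
    (hN (n + N) (by omega)).trans (hstep (n + N))
  have hΔ : 0 ≤ t (n + N + 1) - t (n + N) := sub_nonneg.2 (ht (n + N).le_succ)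
  have hwle : w (n + N) ≤ A * (N + 1) * (n + 1) := (hw (n + N)).2.trans <| by
    push_cast
    nlinarith [mul_nonneg hA.le (mul_nonneg (n.cast_nonneg : (0 : ℝ) ≤ n) N.cast_nonneg)]
  rw [div_div, div_le_iff₀ (by positivity)]
  nlinarith [mul_le_mul_of_nonneg_right hwle hΔ]

theorem not_summable_of_sub_succ_le_mul_sq {τ : ℕ → ℝ} {q : ℝ} (hq : 0 ≤ q)
    (hτ : ∀ n, 0 < τ n) (hstep : ∀ n, τ n - τ (n + 1) ≤ q * τ n ^ 2)
    (hsmall : ∀ n, q * τ n ≤ 1 / 2) : ¬ Summable τ := by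
  -- `1 / τ` grows at most linearly, so `τ` is bounded below by a harmonic sequence
  have hinv : ∀ n, 1 / τ (n + 1) ≤ 1 / τ n + 2 * q := by
    intro n
    have h₀ := hτ n
    have h₁ := hτ (n + 1)
    have hhalf : τ n ≤ 2 * τ (n + 1) := by nlinarith [hstep n, hsmall n]
    rw [div_add' _ _ _ h₀.ne', div_le_div_iff₀ h₁ h₀]
    nlinarith [hstep n, mul_le_mul_of_nonneg_left hhalf (mul_nonneg hq h₀.le)]
  have hlin : ∀ n : ℕ, 1 / τ n ≤ (1 / τ 0 + 2 * q) * (n + 1) := by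
    intro n
    induction n with
    | zero => simp only [CharP.cast_eq_zero, zero_add, mul_one]; linarith
    | succ n ih => push_cast; linarith [hinv n, one_div_pos.2 (hτ 0)]
  refine not_summable_of_div_succ_le (m := 1 / (1 / τ 0 + 2 * q))
    (by have := hτ 0; positivity) fun n => ?_
  have := (div_le_iff₀ (hτ n)).1 (hlin n)
  rw [div_div, div_le_iff₀ (by have := hτ 0; positivity)]
  linarith

theorem eventually_gap_le_and_kick_of_order_one {f₁ f₂ : ℝ → ℝ} {b a₁ a₂ : ℝ}
    (hf₁ : ∀ᶠ x in 𝓝[<] b, DifferentiableAt ℝ f₁ x)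
    (hf₂ : ∀ᶠ x in 𝓝[<] b, DifferentiableAt ℝ f₂ x)
    (hgap : ∀ᶠ x in 𝓝[<] b, f₁ x < f₂ x)
    (hgap₀ : Tendsto (fun x => f₂ x - f₁ x) (𝓝[<] b) (𝓝 0))
    (h₁ : Tendsto (deriv f₁) (𝓝[<] b) (𝓝 a₁)) (h₂ : Tendsto (deriv f₂) (𝓝[<] b) (𝓝 a₂))
    (hne : a₁ ≠ a₂) :
    ∃ c C : ℝ, 0 < c ∧ 0 ≤ C ∧ ∀ᶠ s in 𝓝[<] b,
      f₂ s - f₁ s ≤ C * (b - s) ∧ ∀ u ∈ Ico s b, c ≤ deriv f₁ u - deriv f₂ s := by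
  have hdiff : ∀ᶠ x in 𝓝[<] b, DifferentiableAt ℝ (fun x => f₂ x - f₁ x) x :=
    (hf₂.and hf₁).mono fun x hx => hx.1.sub hx.2
  have hderiv : Tendsto (deriv fun x => f₂ x - f₁ x) (𝓝[<] b) (𝓝 (a₂ - a₁)) := by
    refine (h₂.sub h₁).congr' ?_
    filter_upwards [hf₁, hf₂] with x hx₁ hx₂ using (deriv_fun_sub hx₂ hx₁).symm
  -- a gap increasing up to `b` would be negative before `b`
  have ha : a₂ < a₁ := by
    refine (lt_or_gt_of_ne hne).resolve_left fun h => ?_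
    obtain ⟨s, hs, hgs, hsb⟩ := ((eventually_sub_mem_Icc_of_tendsto_deriv hdiff hgap₀ hderiv
      (lo := (a₂ - a₁) / 2) (hi := a₂ - a₁ + 1) (by linarith) (by linarith)).and
      (hgap.and self_mem_nhdsWithin)).exists
    nlinarith [hs.1]
  refine ⟨(a₁ - a₂) / 2, 2 * (a₁ - a₂), by linarith, by linarith, ?_⟩
  filter_upwards [eventually_sub_mem_Icc_of_tendsto_deriv hdiff hgap₀ hderiv
      (lo := 2 * (a₂ - a₁)) (hi := 0) (by linarith) (by linarith),
    eventually_nhdsLT_forall_Ico (h₁.eventually (eventually_ge_nhds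
      (show a₁ - (a₁ - a₂) / 4 < a₁ by linarith))),
    h₂.eventually (eventually_le_nhds (show a₂ < a₂ + (a₁ - a₂) / 4 by linarith))]
    with s hs hs₁ hs₂
  exact ⟨by linarith [hs.1], fun u hu => by linarith [hs₁ u hu]⟩

theorem eventually_gap_le_and_kick_of_order_two {f₁ f₂ : ℝ → ℝ} {b a a₁ a₂ : ℝ}
    (hf₁ : ∀ᶠ x in 𝓝[<] b, DifferentiableAt ℝ f₁ x ∧ DifferentiableAt ℝ (deriv f₁) x)
    (hf₂ : ∀ᶠ x in 𝓝[<] b, DifferentiableAt ℝ f₂ x ∧ DifferentiableAt ℝ (deriv f₂) x)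
    (hgap : ∀ᶠ x in 𝓝[<] b, f₁ x < f₂ x)
    (hgap₀ : Tendsto (fun x => f₂ x - f₁ x) (𝓝[<] b) (𝓝 0))
    (h₁ : Tendsto (deriv f₁) (𝓝[<] b) (𝓝 a)) (h₂ : Tendsto (deriv f₂) (𝓝[<] b) (𝓝 a))
    (h₁' : Tendsto (deriv (deriv f₁)) (𝓝[<] b) (𝓝 a₁))
    (h₂' : Tendsto (deriv (deriv f₂)) (𝓝[<] b) (𝓝 a₂)) (hne : a₁ ≠ a₂) :
    ∃ c C M : ℝ, 0 < c ∧ 0 ≤ C ∧ 0 ≤ M ∧ ∀ᶠ s in 𝓝[<] b,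
      f₂ s - f₁ s ≤ C * (b - s) ^ 2 ∧
      ∀ u ∈ Ico s b, c * (b - s) - M * (u - s) ≤ deriv f₁ u - deriv f₂ s := by
  set φ := fun x => deriv f₂ x - deriv f₁ x
  have hφdiff : ∀ᶠ x in 𝓝[<] b, DifferentiableAt ℝ φ x :=
    (hf₂.and hf₁).mono fun x hx => hx.1.2.sub hx.2.2
  have hφ₀ : Tendsto φ (𝓝[<] b) (𝓝 0) := by simpa [φ] using h₂.sub h₁
  have hφderiv : Tendsto (deriv φ) (𝓝[<] b) (𝓝 (a₂ - a₁)) := by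
    refine (h₂'.sub h₁').congr' ?_
    filter_upwards [hf₁, hf₂] with x hx₁ hx₂ using (deriv_fun_sub hx₂.2 hx₁.2).symm
  have hgap_le : ∀ᶠ s in 𝓝[<] b, ∀ lo, (∀ x ∈ Ioo s b, lo ≤ φ x) →
      lo * (b - s) ≤ -(f₂ s - f₁ s) := by
    filter_upwards [eventually_nhdsLT_forall_Ico (hf₁.and hf₂), self_mem_nhdsWithin]
      with s hs hsb lo hlo
    have := mul_sub_le_sub_of_le_deriv_of_tendsto (F := fun x => f₂ x - f₁ x) (lo := lo) hsb
      (fun x hx => (hs x hx).2.1.sub (hs x hx).1.1) hgap₀ fun x hx => by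
        rw [deriv_fun_sub (hs x (Ioo_subset_Ico_self hx)).2.1 (hs x (Ioo_subset_Ico_self hx)).1.1]
        exact hlo x hx
    simpa using this
  -- otherwise `φ > 0` near `b`, and the gap would increase to its limit `0`
  have ha : a₁ < a₂ := by
    refine (lt_or_gt_of_ne hne).resolve_right fun h => ?_
    obtain ⟨s, hs, hgs, hlt, hsb⟩ := ((eventually_nhdsLT_forall_Ico
      (eventually_sub_mem_Icc_of_tendsto_deriv hφdiff hφ₀ hφderiv (lo := a₂ - a₁ - 1)
        (hi := (a₂ - a₁) / 2) (by linarith) (by linarith))).and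
      (hgap_le.and (hgap.and self_mem_nhdsWithin))).exists
    have := hgs 0 fun x hx => by nlinarith [(hs x (Ioo_subset_Ico_self hx)).2, hx.2]
    linarith
  refine ⟨(a₂ - a₁) / 2, 2 * (a₂ - a₁), |a₁| + 1, by linarith, by linarith, by positivity, ?_⟩
  filter_upwards [eventually_nhdsLT_forall_Ico (eventually_sub_mem_Icc_of_tendsto_deriv hφdiff
      hφ₀ hφderiv (lo := (a₂ - a₁) / 2) (hi := 2 * (a₂ - a₁)) (by linarith) (by linarith)),
    hgap_le, eventually_nhdsLT_forall_Ico (hf₁.and (h₁'.abs.eventually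
      (eventually_le_nhds (lt_add_one |a₁|)))), self_mem_nhdsWithin] with s hφs hgs hf₁s hsb
  constructor
  · have := hgs (-(2 * (a₂ - a₁) * (b - s))) fun x hx => by
      nlinarith [(hφs x (Ioo_subset_Ico_self hx)).2, hx.1]
    nlinarith
  · intro u hu
    have hlip : |deriv f₁ u - deriv f₁ s| ≤ (|a₁| + 1) * |u - s| := by
      simpa only [Real.norm_eq_abs] using (convex_Ico s b).norm_image_sub_le_of_norm_deriv_le
        (fun x hx => (hf₁s x hx).1.2) (fun x hx => (hf₁s x hx).2) (left_mem_Ico.2 hsb) hu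
    rw [abs_of_nonneg (sub_nonneg.2 hu.1)] at hlip
    linarith [(abs_le.1 hlip).1, (hφs s (left_mem_Ico.2 hsb)).1]

structure ContactEstimates (f₁ f₂ : ℝ → ℝ) (b : ℝ) (k : ℕ) (c C L M s : ℝ) : Prop where
  differentiableAt_fst : DifferentiableAt ℝ f₁ s
  differentiableAt_snd : DifferentiableAt ℝ f₂ s
  abs_deriv_fst_le : |deriv f₁ s| ≤ L
  abs_deriv_snd_le : |deriv f₂ s| ≤ L
  gap_pos : f₁ s < f₂ s
  gap_le : f₂ s - f₁ s ≤ C * (b - s) ^ k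
  /-- the speed gain `2 (f₁' u - f₂' s)` of a ball leaving the upper plate at `s` and hitting
  the lower plate at `u` is at least twice this bound -/
  kick : ∀ u ∈ Ico s b, c * (b - s) ^ (k - 1) - M * (u - s) ≤ deriv f₁ u - deriv f₂ s

theorem eventually_contactEstimates {f₁ f₂ : ℝ → ℝ} {a b : ℝ} {k : ℕ} {d₁ d₂ : ℕ → ℝ}
    (hab : a < b) (hk : k = 1 ∨ k = 2)
    (hsm₁ : ContDiffOn ℝ k f₁ (Ioo a b)) (hsm₂ : ContDiffOn ℝ k f₂ (Ioo a b))
    (hlt : ∀ s ∈ Ioo a b, f₁ s < f₂ s)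
    (hd₁ : ∀ j ≤ k, Tendsto (iteratedDerivWithin j f₁ (Ioo a b)) (𝓝[Ioo a b] b) (𝓝 (d₁ j)))
    (hd₂ : ∀ j ≤ k, Tendsto (iteratedDerivWithin j f₂ (Ioo a b)) (𝓝[Ioo a b] b) (𝓝 (d₂ j)))
    (heq : ∀ j < k, d₁ j = d₂ j) (hne : d₁ k ≠ d₂ k) :
    ∃ c C L M : ℝ, 0 < c ∧ 0 ≤ C ∧ 0 ≤ L ∧ 0 ≤ M ∧
      ∀ᶠ s in 𝓝[<] b, ContactEstimates f₁ f₂ b k c C L M s := by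
  have lim₁ := fun j hj => tendsto_iteratedDeriv_nhdsLT hab (hd₁ j hj)
  have lim₂ := fun j hj => tendsto_iteratedDeriv_nhdsLT hab (hd₂ j hj)
  have diff : ∀ f : ℝ → ℝ, ContDiffOn ℝ k f (Ioo a b) → ∀ j < k,
      ∀ᶠ x in 𝓝[<] b, DifferentiableAt ℝ (iteratedDeriv j f) x := fun f hf j hj => by
    filter_upwards [Ioo_mem_nhdsLT hab] with x hx using
      hf.differentiableAt_iteratedDeriv isOpen_Ioo (by exact_mod_cast hj) hx
  have hgap : ∀ᶠ x in 𝓝[<] b, f₁ x < f₂ x := by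
    filter_upwards [Ioo_mem_nhdsLT hab] using hlt
  have hgap₀ : Tendsto (fun x => f₂ x - f₁ x) (𝓝[<] b) (𝓝 0) := by
    have h := (lim₂ 0 (Nat.zero_le k)).sub (lim₁ 0 (Nat.zero_le k))
    rwa [heq 0 (by omega), sub_self, iteratedDeriv_zero, iteratedDeriv_zero] at h
  have hk₁ : 1 ≤ k := by omega
  have hL : ∀ᶠ x in 𝓝[<] b, |deriv f₁ x| ≤ |d₁ 1| + |d₂ 1| + 1 ∧
      |deriv f₂ x| ≤ |d₁ 1| + |d₂ 1| + 1 := by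
    have h₁ := (lim₁ 1 hk₁).abs.eventually (eventually_le_nhds (lt_add_one |d₁ 1|))
    have h₂ := (lim₂ 1 hk₁).abs.eventually (eventually_le_nhds (lt_add_one |d₂ 1|))
    filter_upwards [h₁, h₂] with x hx₁ hx₂
    rw [iteratedDeriv_one] at hx₁ hx₂
    exact ⟨by linarith [abs_nonneg (d₂ 1)], by linarith [abs_nonneg (d₁ 1)]⟩
  have hf₁ := diff f₁ hsm₁ 0 (by omega)
  have hf₂ := diff f₂ hsm₂ 0 (by omega)
  rw [iteratedDeriv_zero] at hf₁ hf₂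
  rcases hk with rfl | rfl
  · obtain ⟨c, C, hc, hC, h⟩ := eventually_gap_le_and_kick_of_order_one hf₁ hf₂ hgap hgap₀
      (by simpa using lim₁ 1 le_rfl) (by simpa using lim₂ 1 le_rfl) hne
    refine ⟨c, C, |d₁ 1| + |d₂ 1| + 1, 0, hc, hC, by positivity, le_rfl, ?_⟩
    filter_upwards [hf₁, hf₂, hL, hgap, h] with s h₁ h₂ hL hgap h
    exact ⟨h₁, h₂, hL.1, hL.2, hgap, by simpa using h.1, fun u hu => by simpa using h.2 u hu⟩
  · have h2 : ∀ f : ℝ → ℝ, iteratedDeriv 2 f = deriv (deriv f) := fun f => by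
      rw [iteratedDeriv_succ, iteratedDeriv_one]
    obtain ⟨c, C, M, hc, hC, hM, h⟩ := eventually_gap_le_and_kick_of_order_two
      (hf₁.and (by simpa using diff f₁ hsm₁ 1 (by norm_num)))
      (hf₂.and (by simpa using diff f₂ hsm₂ 1 (by norm_num))) hgap hgap₀
      (by simpa using lim₁ 1 (by norm_num))
      (by simpa [heq 1 (by norm_num)] using lim₂ 1 (by norm_num))
      (by simpa [h2] using lim₁ 2 le_rfl) (by simpa [h2] using lim₂ 2 le_rfl) hne
    refine ⟨c, C, |d₁ 1| + |d₂ 1| + 1, M, hc, hC, by positivity, hM, ?_⟩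
    filter_upwards [hf₁, hf₂, hL, hgap, h] with s h₁ h₂ hL hgap h
    exact ⟨h₁, h₂, hL.1, hL.2, hgap, h.1, fun u hu => by simpa using h.2 u hu⟩

section Dynamics

variable {g b ε c C L M : ℝ} {k : ℕ} {f₁ f₂ : ℝ → ℝ} {t v tt vv : ℕ → ℝ}

theorem IsFUTrajectory.strictMono (htraj : IsFUTrajectory g f₁ f₂ t v tt vv) : StrictMono t :=
  strictMono_nat_of_lt_succ fun n => (htraj n).2.2.1.trans (htraj n).2.2.2.1

theorem ContactEstimates.gap_le_mul {s : ℝ} (h : ContactEstimates f₁ f₂ b k c C L M s)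
    (hC : 0 ≤ C) (hk : 1 ≤ k) (hsb : s < b) (hs : b - s ≤ 1) : f₂ s - f₁ s ≤ C * (b - s) :=
  h.gap_le.trans (mul_le_mul_of_nonneg_left (pow_le_of_le_one (by linarith) hs (by omega)) hC)

theorem abs_sub_le_of_contactEstimates
    (hB : ∀ s ∈ Ioo (b - ε) b, ContactEstimates f₁ f₂ b k c C L M s) {x y : ℝ}
    (hx : x ∈ Ioo (b - ε) b) (hy : y ∈ Ioo (b - ε) b) :
    |f₁ y - f₁ x| ≤ L * |y - x| ∧ |f₂ y - f₂ x| ≤ L * |y - x| := by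
  simp only [← Real.norm_eq_abs]
  exact ⟨(convex_Ioo _ _).norm_image_sub_le_of_norm_deriv_le
      (fun z hz => (hB z hz).differentiableAt_fst) (fun z hz => (hB z hz).abs_deriv_fst_le) hx hy,
    (convex_Ioo _ _).norm_image_sub_le_of_norm_deriv_le
      (fun z hz => (hB z hz).differentiableAt_snd) (fun z hz => (hB z hz).abs_deriv_snd_le) hx hy⟩

theorem IsFUTrajectory.upper_collision (htraj : IsFUTrajectory g f₁ f₂ t v tt vv) (hg : 0 ≤ g)
    (hC : 0 ≤ C) (hk : 1 ≤ k) (hε : ε ≤ 1)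
    (hB : ∀ s ∈ Ioo (b - ε) b, ContactEstimates f₁ f₂ b k c C L M s) {n : ℕ}
    (htn : t n ∈ Ioo (b - ε) b) (hv : g + 2 * L ≤ v n) (hvC : 2 * C < v n) :
    tt n < b ∧ v n * (tt n - t n) ≤ 2 * (f₂ (t n) - f₁ (t n)) := by
  obtain ⟨hv₀, -, -, -, -, hfirst, -⟩ := htraj n
  set G := f₂ (t n) - f₁ (t n)
  set h := 2 * G / v n
  have hvh : v n * h = 2 * G := mul_div_cancel₀ _ hv₀.ne'
  have hG : 0 < G := sub_pos.2 (hB _ htn).gap_pos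
  have hh : 0 ≤ h := by positivity
  have hhτ : h < b - t n := by
    have := (hB _ htn).gap_le_mul hC hk htn.2 (by linarith [htn.1])
    nlinarith [htn.2]
  have hwin : Icc (t n) (t n + h) ⊆ Ioo (b - ε) b := fun x hx =>
    ⟨by linarith [htn.1, hx.1], by linarith [hx.2]⟩
  have hf₂ : ContinuousOn f₂ (Icc (t n) (t n + h)) := fun x hx =>
    (hB x (hwin hx)).differentiableAt_snd.continuousAt.continuousWithinAt
  have hlip := (abs_sub_le_of_contactEstimates hB htn (hwin (right_mem_Icc.2 (by linarith)))).2
  rw [add_sub_cancel_left, abs_of_nonneg hh] at hlip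
  have hcoll : tt n ≤ t n + h := by
    refine le_of_forall_zero_le_of_sign_change
      (ψ := fun s => v n * (s - t n) - g / 2 * (s - t n) ^ 2 - (f₂ s - f₁ (t n)))
      (by linarith) (by fun_prop) (by simp only [sub_self]; linarith) ?_
      fun s hs h0 => hfirst s hs (by linarith)
    simp only [add_sub_cancel_left]
    nlinarith [(abs_le.1 hlip).2, mul_le_mul_of_nonneg_left hv hh,
      mul_le_mul_of_nonneg_left (show h ≤ 1 by linarith [htn.1]) (mul_nonneg hg hh)]
  exact ⟨by linarith, by nlinarith⟩

theorem IsFUTrajectory.lower_collision (htraj : IsFUTrajectory g f₁ f₂ t v tt vv) (hg : 0 ≤ g)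
    (hC : 0 ≤ C) (hk : 1 ≤ k) (hε : ε ≤ 1)
    (hB : ∀ s ∈ Ioo (b - ε) b, ContactEstimates f₁ f₂ b k c C L M s) {n : ℕ}
    (htt : tt n ∈ Ioo (b - ε) b) (hw : 2 * L ≤ -vv n) (hwC : 2 * C < -vv n) :
    t (n + 1) < b ∧ -vv n * (t (n + 1) - tt n) ≤ 2 * (f₂ (tt n) - f₁ (tt n)) := by
  obtain ⟨-, hvv₀, -, -, -, -, -, -, hfirst, -⟩ := htraj n
  set G := f₂ (tt n) - f₁ (tt n)
  set h := 2 * G / -vv n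
  have hwh : -vv n * h = 2 * G := mul_div_cancel₀ _ (by linarith)
  have hG : 0 < G := sub_pos.2 (hB _ htt).gap_pos
  have hh : 0 ≤ h := div_nonneg (by linarith) (by linarith)
  have hhτ : h < b - tt n := by
    have := (hB _ htt).gap_le_mul hC hk htt.2 (by linarith [htt.1])
    nlinarith [htt.2]
  have hwin : Icc (tt n) (tt n + h) ⊆ Ioo (b - ε) b := fun x hx =>
    ⟨by linarith [htt.1, hx.1], by linarith [hx.2]⟩
  have hf₁ : ContinuousOn f₁ (Icc (tt n) (tt n + h)) := fun x hx =>
    (hB x (hwin hx)).differentiableAt_fst.continuousAt.continuousWithinAt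
  have hlip := (abs_sub_le_of_contactEstimates hB htt (hwin (right_mem_Icc.2 (by linarith)))).1
  rw [add_sub_cancel_left, abs_of_nonneg hh] at hlip
  have hcoll : t (n + 1) ≤ tt n + h := by
    refine le_of_forall_zero_le_of_sign_change
      (ψ := fun s => -vv n * (s - tt n) + g / 2 * (s - tt n) ^ 2 - (f₂ (tt n) - f₁ s))
      (by linarith) (by fun_prop) (by simp only [sub_self]; linarith) ?_
      fun s hs h0 => hfirst s hs (by linarith)
    simp only [add_sub_cancel_left]
    nlinarith [(abs_le.1 hlip).1, mul_le_mul_of_nonneg_left hw hh, sq_nonneg h]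
  exact ⟨by linarith, by nlinarith⟩

theorem IsFUTrajectory.bounce_time (htraj : IsFUTrajectory g f₁ f₂ t v tt vv) (hg : 0 ≤ g)
    (hC : 0 ≤ C) (hk : 1 ≤ k) (hε : ε ≤ 1)
    (hB : ∀ s ∈ Ioo (b - ε) b, ContactEstimates f₁ f₂ b k c C L M s) {n : ℕ}
    (htn : t n ∈ Ioo (b - ε) b) (hv : 2 * g + 4 * L + 4 * C < v n) :
    tt n < b ∧ t (n + 1) < b ∧ v n * (t (n + 1) - t n) ≤ 6 * C * (b - t n) ^ k := by
  obtain ⟨-, -, htt, htt₁, -, -, hvv, -⟩ := htraj n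
  have hL : 0 ≤ L := (abs_nonneg _).trans (hB _ htn).abs_deriv_fst_le
  obtain ⟨httb, hup⟩ := htraj.upper_collision hg hC hk hε hB htn (by linarith) (by linarith)
  have httwin : tt n ∈ Ioo (b - ε) b := ⟨by linarith [htn.1], httb⟩
  have hw : v n ≤ 2 * -vv n := by
    have := (abs_le.1 (hB _ httwin).abs_deriv_snd_le).2
    nlinarith [mul_le_mul_of_nonneg_left (show tt n - t n ≤ 1 by linarith [htn.1]) hg]
  obtain ⟨ht₁b, hdown⟩ :=
    htraj.lower_collision hg hC hk hε hB httwin (by linarith) (by linarith)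
  refine ⟨httb, ht₁b, ?_⟩
  have hG₀ := (hB _ htn).gap_le
  have hG₁ : f₂ (tt n) - f₁ (tt n) ≤ C * (b - t n) ^ k := (hB _ httwin).gap_le.trans
    (mul_le_mul_of_nonneg_left (pow_le_pow_left₀ (by linarith) (by linarith) k) hC)
  nlinarith [mul_le_mul_of_nonneg_right hw (show 0 ≤ t (n + 1) - tt n by linarith)]

theorem IsFUTrajectory.gap_le_mul_sub (htraj : IsFUTrajectory g f₁ f₂ t v tt vv) (hg : 0 ≤ g)
    (hB : ∀ s ∈ Ioo (b - ε) b, ContactEstimates f₁ f₂ b k c C L M s) {n : ℕ}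
    (htn : t n ∈ Ioo (b - ε) b) (httb : tt n < b) :
    f₂ (t n) - f₁ (t n) ≤ (v n + L) * (t (n + 1) - t n) := by
  obtain ⟨hv₀, -, htt, htt₁, hflight, -⟩ := htraj n
  have hlip := (abs_sub_le_of_contactEstimates hB htn ⟨by linarith [htn.1], httb⟩).2
  rw [abs_of_pos (sub_pos.2 htt)] at hlip
  have hL : 0 ≤ L := (abs_nonneg _).trans (hB _ htn).abs_deriv_fst_le
  nlinarith [(abs_le.1 hlip).1, sq_nonneg (tt n - t n),
    mul_le_mul_of_nonneg_left (show tt n - t n ≤ t (n + 1) - t n by linarith)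
      (show 0 ≤ v n + L by linarith)]

theorem IsFUTrajectory.velocity_bounds (htraj : IsFUTrajectory g f₁ f₂ t v tt vv) (hg : 0 ≤ g)
    (hM : 0 ≤ M) (hε : ε ≤ 1)
    (hB : ∀ s ∈ Ioo (b - ε) b, ContactEstimates f₁ f₂ b k c C L M s) {n : ℕ}
    (htn : t n ∈ Ioo (b - ε) b) (ht₁b : t (n + 1) < b) :
    v n + 2 * c * (b - tt n) ^ (k - 1) - (g + 2 * M) * (t (n + 1) - t n) ≤ v (n + 1) ∧
      v (n + 1) ≤ v n + g + 4 * L := by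
  obtain ⟨-, -, htt, htt₁, -, -, -, -, -, hv₁⟩ := htraj n
  have httwin : tt n ∈ Ioo (b - ε) b := ⟨by linarith [htn.1], by linarith⟩
  have ht₁win : t (n + 1) ∈ Ioo (b - ε) b := ⟨by linarith [htn.1], ht₁b⟩
  have hkick := (hB _ httwin).kick (t (n + 1)) ⟨htt₁.le, ht₁b⟩
  have h₁ := abs_le.1 (hB _ ht₁win).abs_deriv_fst_le
  have h₂ := abs_le.1 (hB _ httwin).abs_deriv_snd_le
  rw [hv₁]
  constructor
  · nlinarith [mul_le_mul_of_nonneg_left (show t (n + 1) - tt n ≤ t (n + 1) - t n by linarith) hM,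
      mul_le_mul_of_nonneg_left (show t n - tt n ≤ t (n + 1) - 2 * tt n + t n by linarith) hg]
  · nlinarith [mul_le_mul_of_nonneg_left
      (show t (n + 1) - 2 * tt n + t n ≤ 1 by linarith [htn.1]) hg]

theorem IsFUTrajectory.collision_lt_and_velocity_ge (htraj : IsFUTrajectory g f₁ f₂ t v tt vv)
    (hg : 0 ≤ g) (hc : 0 ≤ c) (hC : 0 ≤ C) (hM : 0 ≤ M) (hk : 1 ≤ k) (hε : ε ≤ 1)
    (hB : ∀ s ∈ Ioo (b - ε) b, ContactEstimates f₁ f₂ b k c C L M s)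
    (ht₀ : t 0 ∈ Ioo (b - ε) b) (hv₀ : 3 * g + 4 * L + 4 * C + 2 * M < v 0) (n : ℕ) :
    t n < b ∧ v 0 - (g + 2 * M) * (t n - t 0)
      + 2 * c * ∑ j ∈ Finset.range n, (b - tt j) ^ (k - 1) ≤ v n := by
  have hmono := htraj.strictMono.monotone
  induction n with
  | zero => simpa using ht₀.2
  | succ n ih =>
    obtain ⟨htnb, hvn⟩ := ih
    have htn : t n ∈ Ioo (b - ε) b := ⟨ht₀.1.trans_le (hmono n.zero_le), htnb⟩
    have hsum : 0 ≤ ∑ j ∈ Finset.range n, (b - tt j) ^ (k - 1) :=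
      Finset.sum_nonneg fun j hj => pow_nonneg (by
        linarith [(htraj j).2.2.2.1, hmono (Finset.mem_range.1 hj : j + 1 ≤ n)]) _
    have hdrift : (g + 2 * M) * (t n - t 0) ≤ g + 2 * M := mul_le_of_le_one_right
      (by linarith) (by linarith [ht₀.1, hmono n.zero_le])
    obtain ⟨-, ht₁b, -⟩ :=
      htraj.bounce_time hg hC hk hε hB htn (by nlinarith [mul_nonneg hc hsum])
    refine ⟨ht₁b, ?_⟩
    rw [Finset.sum_range_succ]
    nlinarith [(htraj.velocity_bounds hg hM hε hB htn ht₁b).1]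

theorem IsFUTrajectory.tendsto_of_forall_mem (htraj : IsFUTrajectory g f₁ f₂ t v tt vv)
    (hg : 0 ≤ g) (hC : 0 ≤ C) (hM : 0 ≤ M) (hk : 1 ≤ k) (hε : ε ≤ 1)
    (hB : ∀ s ∈ Ioo (b - ε) b, ContactEstimates f₁ f₂ b k c C L M s)
    (hwin : ∀ n, t n ∈ Ioo (b - ε) b) (hfast : ∀ n, 2 * g + 4 * L + 4 * C < v n) :
    Tendsto t atTop (𝓝 b) := by
  have hL : 0 ≤ L := (abs_nonneg _).trans (hB _ (hwin 0)).abs_deriv_fst_le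
  have hbounce := fun n => htraj.bounce_time hg hC hk hε hB (hwin n) (hfast n)
  have hvup : ∀ n : ℕ, v n ≤ v 0 + (g + 4 * L) * n := by
    intro n
    induction n with
    | zero => simp
    | succ n ih =>
      push_cast
      linarith [(htraj.velocity_bounds hg hM hε hB (hwin n) (hbounce n).2.1).2]
  refine htraj.strictMono.monotone.tendsto_of_le_mul_sub (ρ := fun x => f₂ x - f₁ x)
    (w := fun n => v n + L) (A := v 0 + g + 5 * L) (fun n => (hwin n).2) (fun x hx => ?_)
    (fun n => ?_) fun n => htraj.gap_le_mul_sub hg hB (hwin n) (hbounce n).1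
  · have hB' := hB x ⟨(hwin 0).1.trans_le hx.1, hx.2⟩
    exact ⟨(hB'.differentiableAt_snd.sub hB'.differentiableAt_fst).continuousAt,
      sub_pos.2 hB'.gap_pos⟩
  · have := (htraj 0).1
    exact ⟨by linarith [(htraj n).1], by
      nlinarith [hvup n, Nat.cast_nonneg (α := ℝ) n, mul_nonneg hL (Nat.cast_nonneg (α := ℝ) n)]⟩

theorem IsFUTrajectory.tendsto_sum_atTop (htraj : IsFUTrajectory g f₁ f₂ t v tt vv)
    (hg : 0 ≤ g) (hC : 0 ≤ C) (hk : k = 1 ∨ k = 2) (hε : ε ≤ 1)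
    (hB : ∀ s ∈ Ioo (b - ε) b, ContactEstimates f₁ f₂ b k c C L M s)
    (hwin : ∀ n, t n ∈ Ioo (b - ε) b) (hfast : ∀ n, 2 * g + 4 * L + 12 * C < v n) :
    Tendsto (fun n => ∑ j ∈ Finset.range n, (b - tt j) ^ (k - 1)) atTop atTop := by
  refine (not_summable_iff_tendsto_nat_atTop_of_nonneg fun j => pow_nonneg
    (by linarith [(htraj j).2.2.2.1, (hwin (j + 1)).2]) _).1 ?_
  rcases hk with rfl | rfl
  · simp [summable_const_iff]
  · have hτ : ¬ Summable fun n => b - t n := by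
      refine not_summable_of_sub_succ_le_mul_sq (q := 1 / 2) (by norm_num)
        (fun n => sub_pos.2 (hwin n).2) (fun n => ?_) fun n => by linarith [(hwin n).1]
      have hv := (htraj n).1
      have hL : 0 ≤ L := (abs_nonneg _).trans (hB _ (hwin 0)).abs_deriv_fst_le
      have hΔ := (htraj.bounce_time hg hC one_le_two hε hB (hwin n) (by linarith [hfast n])).2.2
      have : v n * (t (n + 1) - t n) ≤ v n * ((b - t n) ^ 2 / 2) := by
        nlinarith [hfast n, sq_nonneg (b - t n)]
      linarith [le_of_mul_le_mul_left this hv]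
    intro hs
    refine hτ ((summable_nat_add_iff 1).1 (hs.of_nonneg_of_le
      (fun n => sub_nonneg.2 (hwin (n + 1)).2.le) fun n => ?_))
    simp only [Nat.reduceSub, pow_one]
    linarith [(htraj n).2.2.2.1]

theorem IsFUTrajectory.unbounded_velocity (htraj : IsFUTrajectory g f₁ f₂ t v tt vv)
    (hg : 0 ≤ g) (hc : 0 < c) (hC : 0 ≤ C) (hM : 0 ≤ M) (hk : k = 1 ∨ k = 2) (hε : ε ≤ 1)
    (hB : ∀ s ∈ Ioo (b - ε) b, ContactEstimates f₁ f₂ b k c C L M s)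
    (ht₀ : t 0 ∈ Ioo (b - ε) b) (hv₀ : 3 * g + 4 * L + 12 * C + 2 * M < v 0) :
    (∀ n, t n < b) ∧ Tendsto t atTop (𝓝 b) ∧ Tendsto v atTop atTop := by
  have hk₁ : 1 ≤ k := by omega
  have hL : 0 ≤ L := (abs_nonneg _).trans (hB _ ht₀).abs_deriv_fst_le
  have hinv := htraj.collision_lt_and_velocity_ge hg hc.le hC hM hk₁ hε hB ht₀ (by linarith)
  have hwin : ∀ n, t n ∈ Ioo (b - ε) b := fun n =>
    ⟨ht₀.1.trans_le (htraj.strictMono.monotone n.zero_le), (hinv n).1⟩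
  have hsum := htraj.tendsto_sum_atTop hg hC hk hε hB hwin
  have hvlow : ∀ n, v 0 - (g + 2 * M) + 2 * c * ∑ j ∈ Finset.range n, (b - tt j) ^ (k - 1)
      ≤ v n := fun n => by
    nlinarith [(hinv n).2, mul_le_of_le_one_right (show 0 ≤ g + 2 * M by linarith)
      (show t n - t 0 ≤ 1 by linarith [ht₀.1, (hwin n).2])]
  have hfast : ∀ n, 2 * g + 4 * L + 12 * C < v n := fun n => by
    have hS : 0 ≤ ∑ j ∈ Finset.range n, (b - tt j) ^ (k - 1) := Finset.sum_nonneg fun j _ =>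
      pow_nonneg (by linarith [(htraj j).2.2.2.1, (hwin (j + 1)).2]) _
    nlinarith [hvlow n, mul_nonneg hc.le hS]
  refine ⟨fun n => (hwin n).2,
    htraj.tendsto_of_forall_mem hg hC hM hk₁ hε hB hwin fun n => by linarith [hfast n], ?_⟩
  exact tendsto_atTop_mono hvlow
    (tendsto_atTop_add_const_left _ _ ((hsum hfast).const_mul_atTop (by positivity)))

end Dynamics

theorem fermi_ulam_touching_plates_unbounded_velocity
    (g : ℝ) (hg : 0 ≤ g) (f₁ f₂ : ℝ → ℝ)
    (tstar ε₁ : ℝ) (hε₁ : 0 < ε₁) (k : ℕ) (hk : k = 1 ∨ k = 2)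
    (hsm₁ : ContDiffOn ℝ k f₁ (Set.Ioo (tstar - ε₁) tstar))
    (hsm₂ : ContDiffOn ℝ k f₂ (Set.Ioo (tstar - ε₁) tstar))
    (hlt : ∀ s ∈ Set.Ioo (tstar - ε₁) tstar, f₁ s < f₂ s)
    (d₁ d₂ : ℕ → ℝ)
    (hd₁ : ∀ j ≤ k, Tendsto
      (iteratedDerivWithin j f₁ (Set.Ioo (tstar - ε₁) tstar))
      (𝓝[Set.Ioo (tstar - ε₁) tstar] tstar) (𝓝 (d₁ j)))
    (hd₂ : ∀ j ≤ k, Tendsto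
      (iteratedDerivWithin j f₂ (Set.Ioo (tstar - ε₁) tstar))
      (𝓝[Set.Ioo (tstar - ε₁) tstar] tstar) (𝓝 (d₂ j)))
    (heq : ∀ j < k, d₁ j = d₂ j) (hne : d₁ k ≠ d₂ k) :
    ∃ K > (0 : ℝ), ∃ ε > (0 : ℝ), ∀ t v tt vv : ℕ → ℝ,
      IsFUTrajectory g f₁ f₂ t v tt vv →
      K < v 0 → t 0 ∈ Set.Ioo (tstar - ε) tstar →
      (∀ n : ℕ, t n < tstar) ∧
      Tendsto t atTop (𝓝 tstar) ∧
      Tendsto v atTop atTop := by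
  obtain ⟨c, C, L, M, hc, hC, hL, hM, hB⟩ := eventually_contactEstimates
    (by linarith : tstar - ε₁ < tstar) hk hsm₁ hsm₂ hlt hd₁ hd₂ heq hne
  obtain ⟨a, ha, hBa⟩ := (nhdsLT_basis tstar).eventually_iff.1 hB
  refine ⟨3 * g + 4 * L + 12 * C + 2 * M + 1, by positivity, min (tstar - a) 1,
    lt_min (sub_pos.2 ha) one_pos, fun t v tt vv htraj hv₀ ht₀ => ?_⟩
  refine htraj.unbounded_velocity hg hc hC hM hk (min_le_right _ _)
    (fun s hs => hBa ⟨?_, hs.2⟩) ht₀ (by linarith)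
  linarith [min_le_left (tstar - a) 1, hs.1]
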